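/- Under the iterationwise star-convex path condition with 0 < η ≤ 1/L, the one-step inequality ℓ_{ξ_k}(x_{k+1}) - ℓ_{ξ_k}(x*) ≤ (1/(2η))(‖x_k - x*‖² - ‖x_{k+1} - x*‖²) holds for every x* ∈ X*_{ξ_k}; summing over k yields ∑_{k=0}^{K} (ℓ_{ξ_k}(x_{k+1}) - ℓ_{ξ_k}(x*)) ≤ ‖x_0 - x*‖²/(2η) whenever x* is a common global minimizer of all ℓ_i. -/

import Mathlib

open scoped RealInnerProductSpace BigOperators

lemma descent_lemma {E : Type*} [NormedAddCommGroup E] [InnerProductSpace ℝ E]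
    [CompleteSpace E] {f : E → ℝ} {g : E → E} {L : ℝ} (hL : 0 ≤ L)
    (hgrad : ∀ z, HasGradientAt f (g z) z)
    (hlip : ∀ u v, ‖g u - g v‖ ≤ L * ‖u - v‖) (x y : E) :
    f y ≤ f x + ⟪g x, y - x⟫ + L / 2 * ‖y - x‖ ^ 2 := by
  set c : ℝ → E := fun t => x + t • (y - x) with hc_def
  have hc : ∀ t : ℝ, HasDerivAt c (y - x) t := fun t => by
    simpa [hc_def] using ((hasDerivAt_id t).smul_const (y - x)).const_add x
  have hφ : ∀ t : ℝ, HasDerivAt (fun s => f (c s)) ⟪g (c t), y - x⟫ t := fun t => by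
    have h1 := (hgrad (c t)).hasFDerivAt.comp_hasDerivAt t (hc t)
    simp only [InnerProductSpace.toDual_apply_apply] at h1; exact h1
  have hcontg : Continuous g := by
    have : LipschitzWith (Real.toNNReal L) g := by
      apply LipschitzWith.of_dist_le_mul
      intro u v
      simpa [dist_eq_norm, Real.coe_toNNReal L hL] using hlip u v
    exact this.continuous
  have hcc : Continuous c := by
    apply continuous_const.add (continuous_id.smul continuous_const)
  have hφ'cont : Continuous fun t : ℝ => ⟪g (c t), y - x⟫ :=
    (hcontg.comp hcc).inner continuous_const
  have key : f (c 1) - f (c 0) = ∫ t in (0:ℝ)..1, ⟪g (c t), y - x⟫ :=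
    (intervalIntegral.integral_eq_sub_of_hasDerivAt (fun t _ => hφ t)
      (hφ'cont.intervalIntegrable 0 1)).symm
  have hmono : (∫ t in (0:ℝ)..1, ⟪g (c t), y - x⟫) ≤
      ∫ t in (0:ℝ)..1, (⟪g x, y - x⟫ + (L * ‖y - x‖ ^ 2) * t) := by
    apply intervalIntegral.integral_mono_on (by norm_num)
      (hφ'cont.intervalIntegrable 0 1)
      ((continuous_const.add (continuous_const.mul continuous_id')).intervalIntegrable 0 1)
    intro t ht

    have h1 : ⟪g (c t), y - x⟫ - ⟪g x, y - x⟫ = ⟪g (c t) - g x, y - x⟫ := by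
      rw [inner_sub_left]
    have h2 : ⟪g (c t) - g x, y - x⟫ ≤ ‖g (c t) - g x‖ * ‖y - x‖ :=
      real_inner_le_norm _ _
    have h3 : ‖g (c t) - g x‖ ≤ L * (t * ‖y - x‖) := by
      have := hlip (c t) x
      have hcx : c t - x = t • (y - x) := by simp [hc_def]
      rw [hcx] at this
      simpa [norm_smul, abs_of_nonneg ht.1, mul_assoc] using this
    show ⟪g (c t), y - x⟫ ≤ ⟪g x, y - x⟫ + (L * ‖y - x‖ ^ 2) * t
    nlinarith [norm_nonneg (y - x), mul_le_mul_of_nonneg_right h3 (norm_nonneg (y - x))]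
  have hval : (∫ t in (0:ℝ)..1, (⟪g x, y - x⟫ + (L * ‖y - x‖ ^ 2) * t)) =
      ⟪g x, y - x⟫ + L / 2 * ‖y - x‖ ^ 2 := by
    rw [intervalIntegral.integral_add (f := fun _ => ⟪g x, y - x⟫) (g := fun t => (L * ‖y - x‖ ^ 2) * t) (intervalIntegrable_const)
      ((continuous_const.mul continuous_id').intervalIntegrable 0 1),
      intervalIntegral.integral_const_mul, integral_id]
    simp; ring
  have h0 : c 0 = x := by simp [hc_def]
  have h1 : c 1 = y := by simp [hc_def]
  rw [h0, h1] at key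
  linarith [hmono, key, hval.le, hval.ge]

theorem sgd_one_step_and_summed_bound {d n : ℕ}
    (ℓ : Fin n → EuclideanSpace ℝ (Fin d) → ℝ)
    (g : Fin n → EuclideanSpace ℝ (Fin d) → EuclideanSpace ℝ (Fin d))
    (L η : ℝ) (hL : 0 < L)
    (hgrad : ∀ i z, HasGradientAt (ℓ i) (g i z) z)
    (hlip : ∀ i u v, ‖g i u - g i v‖ ≤ L * ‖u - v‖)
    (hη : 0 < η) (hηL : η ≤ 1 / L)
    (x : ℕ → EuclideanSpace ℝ (Fin d)) (ξ : ℕ → Fin n)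
    (hupd : ∀ k, x (k + 1) = x k - η • g (ξ k) (x k))
    (hstar : ∀ (k : ℕ) (xstar : EuclideanSpace ℝ (Fin d)),
      (∀ y, ℓ (ξ k) xstar ≤ ℓ (ξ k) y) →
      ℓ (ξ k) (x k) - ℓ (ξ k) xstar + ⟪xstar - x k, g (ξ k) (x k)⟫ ≤ 0) :
    (∀ (k : ℕ) (xstar : EuclideanSpace ℝ (Fin d)),
      (∀ y, ℓ (ξ k) xstar ≤ ℓ (ξ k) y) →
      ℓ (ξ k) (x (k + 1)) - ℓ (ξ k) xstar ≤
        (1 / (2 * η)) * (‖x k - xstar‖ ^ 2 - ‖x (k + 1) - xstar‖ ^ 2)) ∧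
    (∀ xstar : EuclideanSpace ℝ (Fin d), (∀ i y, ℓ i xstar ≤ ℓ i y) →
      ∀ K : ℕ, ∑ k ∈ Finset.range (K + 1),
          (ℓ (ξ k) (x (k + 1)) - ℓ (ξ k) xstar) ≤
        ‖x 0 - xstar‖ ^ 2 / (2 * η)) := by
  have hLη : L * η ≤ 1 := by
    rw [le_div_iff₀ hL] at hηL; linarith
  have step : ∀ (k : ℕ) (xstar : EuclideanSpace ℝ (Fin d)),
      (∀ y, ℓ (ξ k) xstar ≤ ℓ (ξ k) y) →
      ℓ (ξ k) (x (k + 1)) - ℓ (ξ k) xstar ≤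
        (1 / (2 * η)) * (‖x k - xstar‖ ^ 2 - ‖x (k + 1) - xstar‖ ^ 2) := by
    intro k xstar hmin
    set G := g (ξ k) (x k) with hG
    have hdesc := descent_lemma hL.le (hgrad (ξ k)) (hlip (ξ k)) (x k) (x (k + 1))
    have hdiff : x (k + 1) - x k = -(η • G) := by
      rw [hupd k, sub_sub_cancel_left]
    rw [hdiff] at hdesc
    have hinner : ⟪G, -(η • G)⟫ = -(η * ‖G‖ ^ 2) := by
      rw [inner_neg_right, real_inner_smul_right, real_inner_self_eq_norm_sq]
    have hnorm : ‖-(η • G)‖ ^ 2 = η ^ 2 * ‖G‖ ^ 2 := by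
      rw [norm_neg, norm_smul, Real.norm_eq_abs, abs_of_pos hη]; ring
    rw [hinner, hnorm] at hdesc
    have hst := hstar k xstar hmin
    have hneg : xstar - x k = -(x k - xstar) := by abel
    rw [hneg, inner_neg_left] at hst
    have hexp : ‖x (k + 1) - xstar‖ ^ 2 =
        ‖x k - xstar‖ ^ 2 - 2 * (η * ⟪x k - xstar, G⟫) + η ^ 2 * ‖G‖ ^ 2 := by
      have hdiff2 : x (k + 1) - xstar = (x k - xstar) - η • G := by
        rw [hupd k]; abel
      rw [hdiff2, norm_sub_sq_real, real_inner_smul_right, norm_smul, Real.norm_eq_abs, abs_of_pos hη]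
      ring
    have hrhs : (1 / (2 * η)) * (‖x k - xstar‖ ^ 2 - ‖x (k + 1) - xstar‖ ^ 2) =
        ⟪x k - xstar, G⟫ - η / 2 * ‖G‖ ^ 2 := by
      rw [hexp]; field_simp; ring
    rw [hrhs]
    have hN : (0:ℝ) ≤ ‖G‖ ^ 2 := sq_nonneg _
    nlinarith [mul_nonneg hη.le hN]
  refine ⟨step, ?_⟩
  intro xstar hmin K
  have hsum : ∑ k ∈ Finset.range (K + 1), (ℓ (ξ k) (x (k + 1)) - ℓ (ξ k) xstar) ≤
      ∑ k ∈ Finset.range (K + 1),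
        (1 / (2 * η)) * (‖x k - xstar‖ ^ 2 - ‖x (k + 1) - xstar‖ ^ 2) :=
    Finset.sum_le_sum fun k _ => step k xstar (hmin (ξ k))
  rw [← Finset.mul_sum,
    Finset.sum_range_sub' (fun k => ‖x k - xstar‖ ^ 2) (K + 1)] at hsum
  have h2η : (0:ℝ) < 1 / (2 * η) := by positivity
  have hfin : (1 / (2 * η)) * (‖x 0 - xstar‖ ^ 2 - ‖x (K + 1) - xstar‖ ^ 2) ≤
      ‖x 0 - xstar‖ ^ 2 / (2 * η) := by
    have heq : ‖x 0 - xstar‖ ^ 2 / (2 * η) = (1 / (2 * η)) * ‖x 0 - xstar‖ ^ 2 := by ring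
    rw [heq]
    exact mul_le_mul_of_nonneg_left (by nlinarith [sq_nonneg ‖x (K + 1) - xstar‖]) h2η.le
  linarith
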